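/- For every standard Young tableau T of partition shape, slink_*(slink_*(T)) = T; i.e., slink_* is an involution on SYT(n). -/

import Mathlib

open scoped Classical

noncomputable section

/-- `T` is a standard Young tableau of shape `μ` with entries `1, …, n`.
Here `μ` is a Young diagram (Mathlib convention: row `0` is the longest row,
so the reading word below reads rows from the largest row index down to row `0`,
which corresponds to French notation read from the top row down), and `T` assigns
`0` to cells outside `μ`. -/
def IsSYT (n : ℕ) (μ : YoungDiagram) (T : ℕ × ℕ → ℕ) : Prop :=
  (∀ c, c ∉ μ → T c = 0) ∧
  Set.BijOn T (↑μ.cells) (Set.Icc 1 n) ∧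
  (∀ i j : ℕ, (i, j + 1) ∈ μ → T (i, j) < T (i, j + 1)) ∧
  (∀ i j : ℕ, (i + 1, j) ∈ μ → T (i, j) < T (i + 1, j))

/-- The value `u` occurs before the value `v` in the row reading word of `T`
(rows read from the top row down, each row left to right). -/
def Precedes (μ : YoungDiagram) (T : ℕ × ℕ → ℕ) (u v : ℕ) : Prop :=
  ∃ cu ∈ μ.cells, ∃ cv ∈ μ.cells,
    T cu = u ∧ T cv = v ∧ (cv.1 < cu.1 ∨ (cu.1 = cv.1 ∧ cu.2 < cv.2))

/-- Interchange the values `a` and `b` in the filling `T`. -/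
def swapVals (a b : ℕ) (T : ℕ × ℕ → ℕ) : ℕ × ℕ → ℕ :=
  fun c => if T c = a then b else if T c = b then a else T c

/-- The elementary dual equivalence `d_i` acting on fillings via the row reading
word: identity if `i` occurs between `i-1` and `i+1`; if `i-1` is in the middle it
swaps the values `i` and `i+1`; if `i+1` is in the middle it swaps `i-1` and `i`. -/
def dT (μ : YoungDiagram) (i : ℕ) (T : ℕ × ℕ → ℕ) : ℕ × ℕ → ℕ :=
  if (Precedes μ T i (i-1) ∧ Precedes μ T (i-1) (i+1)) ∨
     (Precedes μ T (i+1) (i-1) ∧ Precedes μ T (i-1) i) then swapVals i (i+1) T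
  else if (Precedes μ T i (i+1) ∧ Precedes μ T (i+1) (i-1)) ∨
     (Precedes μ T (i-1) (i+1) ∧ Precedes μ T (i+1) i) then swapVals (i-1) i T
  else T

/-- The index (1-based) of the run of `T` containing the value `v`: one plus the
number of inverse descents of the reading word of `T` that are smaller than `v`. -/
def runIdx (μ : YoungDiagram) (T : ℕ × ℕ → ℕ) (v : ℕ) : ℕ :=
  1 + ((Finset.Ico 1 v).filter (fun m => Precedes μ T (m+1) m)).card

/-- `b_j`, the largest value in the `j`-th run of `T`: the number of values in
`{1, …, n}` lying in the first `j` runs. -/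
def bsum (n : ℕ) (μ : YoungDiagram) (T : ℕ × ℕ → ℕ) (j : ℕ) : ℕ :=
  ((Finset.Icc 1 n).filter (fun v => runIdx μ T v ≤ j)).card

/-- `β_j(T)`, the size of the `j`-th run of `T`. -/
def betaRun (n : ℕ) (μ : YoungDiagram) (T : ℕ × ℕ → ℕ) (j : ℕ) : ℕ :=
  bsum n μ T j - bsum n μ T (j - 1)

/-- The first `j` runs of `T` form a superstandard tableau: every value `v` of the
first `j` runs lies in row `runIdx(v) - 1` (0-based; i.e. the `m`-th run fills the
`m`-th row from the bottom, in order). -/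
def FirstRunsSS (n : ℕ) (μ : YoungDiagram) (T : ℕ × ℕ → ℕ) (j : ℕ) : Prop :=
  ∀ v, 1 ≤ v → v ≤ n → runIdx μ T v ≤ j →
    ∀ c ∈ μ.cells, T c = v → c.1 = runIdx μ T v - 1

/-- `T` is the superstandard tableau `U_λ` of its shape: each run fills its row. -/
def IsSuperstandard (μ : YoungDiagram) (T : ℕ × ℕ → ℕ) : Prop :=
  ∀ c ∈ μ.cells, c.1 = runIdx μ T (T c) - 1

/-- `μ_r`, the number of cells in the `r`-th row (1-based) of the shape of the
first `j` runs of `T`. -/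
def shapeRow (μ : YoungDiagram) (T : ℕ × ℕ → ℕ) (j r : ℕ) : ℕ :=
  (μ.cells.filter (fun c => runIdx μ T (T c) ≤ j ∧ c.1 = r - 1)).card

/-- The cells of the `a`-th and `j`-th runs of `T` lying strictly below the `j`-th
row (1-based rows; row `j` has 0-based index `j - 1`). -/
def belowCells (μ : YoungDiagram) (T : ℕ × ℕ → ℕ) (a j : ℕ) : Finset (ℕ × ℕ) :=
  μ.cells.filter (fun c => (runIdx μ T (T c) = a ∨ runIdx μ T (T c) = j) ∧ c.1 + 1 < j)

/-- `T'` is obtained from `T` by permuting the cells of the `a`-th and `j`-th runs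
lying strictly below the `j`-th row, giving the first `k` of these cells (in row
reading order) to the `a`-th run and the rest to the `j`-th run; all other runs,
and the part of the `j`-th run weakly above the `j`-th row, keep their cells. -/
def Redistrib (μ : YoungDiagram) (T T' : ℕ × ℕ → ℕ) (a j k : ℕ) : Prop :=
  (∀ c ∈ μ.cells, runIdx μ T (T c) ≠ a → runIdx μ T (T c) ≠ j →
      runIdx μ T' (T' c) = runIdx μ T (T c)) ∧
  (∀ c ∈ μ.cells, runIdx μ T (T c) = j → j ≤ c.1 + 1 → runIdx μ T' (T' c) = j) ∧
  (∀ c ∈ belowCells μ T a j,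
      runIdx μ T' (T' c) =
        if ((belowCells μ T a j).filter
              (fun c' => c.1 < c'.1 ∨ (c'.1 = c.1 ∧ c'.2 < c.2))).card < k
        then a else j)

/-- The indices `i` and `j` from the definition of `slink` and `slink_*`:
`j` is minimal such that the first `j` runs of `T` do not form a superstandard
tableau, and `i` is minimal with `μ_{i+1} ≤ β_j(T) + i - j` (written additively to
avoid natural subtraction). -/
def SlinkData (n : ℕ) (μ : YoungDiagram) (T : ℕ × ℕ → ℕ) (i j : ℕ) : Prop :=
  1 ≤ j ∧ ¬ FirstRunsSS n μ T j ∧ (∀ j', j' < j → FirstRunsSS n μ T j') ∧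
  1 ≤ i ∧ shapeRow μ T j (i + 1) + j ≤ betaRun n μ T j + i ∧
  (∀ i', 1 ≤ i' → i' < i → betaRun n μ T j + i' < shapeRow μ T j (i' + 1) + j)

/-- `T' = slink_*(T)`: both are standard Young tableaux of a common shape; if `T`
is superstandard then `T' = T`, and otherwise `T'` is obtained by permuting the
cells of the `i`-th and `j`-th runs below the `j`-th row, giving the first
`β_j(T) + i - j` of them to the `i`-th run. -/
def SlinkStarRel (n : ℕ) (T T' : ℕ × ℕ → ℕ) : Prop :=
  ∃ μ : YoungDiagram, IsSYT n μ T ∧ IsSYT n μ T' ∧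
    ((IsSuperstandard μ T ∧ T' = T) ∨
     (¬ IsSuperstandard μ T ∧ ∃ i j, SlinkData n μ T i j ∧
        Redistrib μ T T' i j (betaRun n μ T j + i - j)))

/-- `T' = slink(T)`: both are standard Young tableaux of a common shape; if `T` is
superstandard then `T' = T`, and otherwise `T'` is obtained by permuting the cells
of the `(j-1)`-st and `j`-th runs below the `j`-th row, giving the first
`β_j(T) - 1` of them to the `(j-1)`-st run. -/
def SlinkRel (n : ℕ) (T T' : ℕ × ℕ → ℕ) : Prop :=
  ∃ μ : YoungDiagram, IsSYT n μ T ∧ IsSYT n μ T' ∧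
    ((IsSuperstandard μ T ∧ T' = T) ∨
     (¬ IsSuperstandard μ T ∧ ∃ i j, SlinkData n μ T i j ∧
        Redistrib μ T T' (j - 1) j (betaRun n μ T j - 1)))

/-!
Rows are numbered from `1` as in the paper: row `r` consists of the cells `c` with `c.1 = r - 1`.

Let `(i, j)` be the indices of `T` and `B` the cells of runs `i` and `j` below row `j`.
Run `m < j` of `T` is the left-justified start of row `m`, and `B` lies in rows `≤ i`, meeting
row `i` in its first `μ_i` cells. So in reading order `B` starts with that row, and for `K ≤ μ_i`
the first `K` cells of `B` are the first `K` cells of row `i`. Hence `T' = slink_*(T)` gives run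
`i` the first `β_j(T) + i - j` cells of row `i` and run `j` the rest of `B`. This keeps `B`, the
shape of the first `j` runs and all other runs, so `T'` has the same indices `(i, j)` and
`β_j(T') + i - j = β_i(T)`. Applying `slink_*` again hands run `i` the first `β_i(T)` cells of
row `i`, which are exactly run `i` of `T`, and run `j` the rest of `B`. As a standard Young
tableau is determined by the run of each of its cells, `slink_*(T') = T`.
-/

open Finset

lemma Finset.mem_iff_lt_card_of_isLowerSet {K : Finset ℕ} (hK : IsLowerSet (K : Set ℕ))
    (x : ℕ) : x ∈ K ↔ x < #K := by
  obtain h | ⟨a, ha⟩ := hK.eq_univ_or_Iio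
  · exact absurd (h ▸ K.finite_toSet) Set.infinite_univ
  · obtain rfl : K = range a := by
      rw [← coe_inj, ha, coe_range]
    simp

lemma Nat.exists_eq_of_map_succ_le {f : ℕ → ℕ} (hf : ∀ v, f (v + 1) ≤ f v + 1) {u w m : ℕ}
    (huw : u ≤ w) (hu : f u ≤ m) (hw : m ≤ f w) : ∃ v, u ≤ v ∧ v ≤ w ∧ f v = m := by
  induction w, huw using Nat.le_induction with
  | base => exact ⟨u, le_rfl, le_rfl, by omega⟩
  | succ w huw ih =>
    by_cases h : m ≤ f w
    · obtain ⟨v, hv⟩ := ih h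
      exact ⟨v, hv.1, by omega, hv.2.2⟩
    · exact ⟨w + 1, by omega, le_rfl, by have := hf w; omega⟩

def ReadsBefore (c d : ℕ × ℕ) : Prop := d.1 < c.1 ∨ (c.1 = d.1 ∧ c.2 < d.2)

lemma readsBefore_trichotomy (c d : ℕ × ℕ) : c = d ∨ ReadsBefore c d ∨ ReadsBefore d c := by
  obtain ⟨a, b⟩ := c
  obtain ⟨a', b'⟩ := d
  simp only [ReadsBefore, Prod.mk.injEq]
  omega

lemma ReadsBefore.asymm {c d : ℕ × ℕ} (h : ReadsBefore c d) : ¬ ReadsBefore d c := by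
  unfold ReadsBefore at *
  omega

lemma ReadsBefore.trans {c d e : ℕ × ℕ} (h : ReadsBefore c d) (h' : ReadsBefore d e) :
    ReadsBefore c e := by
  unfold ReadsBefore at *
  omega

/-- The position of `c` in the reading order of `B`, written exactly as in `Redistrib`. -/
def readRank (B : Finset (ℕ × ℕ)) (c : ℕ × ℕ) : ℕ :=
  #(B.filter (fun c' => c.1 < c'.1 ∨ (c'.1 = c.1 ∧ c'.2 < c.2)))

lemma readRank_lt_of_readsBefore {B : Finset (ℕ × ℕ)} {c d : ℕ × ℕ} (hd : d ∈ B)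
    (h : ReadsBefore d c) : readRank B d < readRank B c := by
  refine card_lt_card ⟨fun e he => ?_, fun hsub => ?_⟩
  · rw [mem_filter] at he ⊢
    exact ⟨he.1, ReadsBefore.trans he.2 h⟩
  · have := (mem_filter.1 (hsub (mem_filter.2 ⟨hd, h⟩))).2
    exact ReadsBefore.asymm this this

lemma exists_readRank_eq_zero {B : Finset (ℕ × ℕ)} (hB : B.Nonempty) :
    ∃ c₀ ∈ B, readRank B c₀ = 0 ∧ ∀ c ∈ B, c.1 ≤ c₀.1 := by
  obtain ⟨c₀, hc₀, hmin⟩ := B.exists_min_image (readRank B) hB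
  refine ⟨c₀, hc₀, card_eq_zero.2 (filter_eq_empty_iff.2 fun d hd h => ?_),
    fun c hc => not_lt.1 fun h => ?_⟩
  · exact (hmin d hd).not_gt (readRank_lt_of_readsBefore hd h)
  · exact (hmin c hc).not_gt (readRank_lt_of_readsBefore hc (Or.inl h))

section TopRow

variable {B : Finset (ℕ × ℕ)} {r L : ℕ}

lemma filter_row_col_lt_eq (htop : ∀ s, (r, s) ∈ B ↔ s < L) {K : ℕ} (hK : K ≤ L) :
    B.filter (fun c => c.1 = r ∧ c.2 < K) = (range K).image (Prod.mk r) := by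
  ext ⟨a, b⟩
  simp only [mem_filter, mem_image, mem_range, Prod.mk.injEq]
  constructor
  · rintro ⟨-, rfl, hb⟩
    exact ⟨b, hb, rfl, rfl⟩
  · rintro ⟨b, hb, rfl, rfl⟩
    exact ⟨(htop b).2 (by omega), rfl, hb⟩

lemma card_filter_row_col_lt (htop : ∀ s, (r, s) ∈ B ↔ s < L) {K : ℕ} (hK : K ≤ L) :
    #(B.filter (fun c => c.1 = r ∧ c.2 < K)) = K := by
  rw [filter_row_col_lt_eq htop hK, card_image_of_injective _ (Prod.mk_right_injective r),
    card_range]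

lemma readRank_lt_iff (hrows : ∀ c ∈ B, c.1 ≤ r) (htop : ∀ s, (r, s) ∈ B ↔ s < L) {K : ℕ}
    (hK : K ≤ L) {c : ℕ × ℕ} (hc : c ∈ B) : readRank B c < K ↔ c.1 = r ∧ c.2 < K := by
  rcases (hrows c hc).lt_or_eq with hlt | hrow
  · have : L ≤ readRank B c := by
      rw [← card_range L, ← card_image_of_injective _ (Prod.mk_right_injective r)]
      refine card_le_card fun d hd => ?_
      obtain ⟨s, hs, rfl⟩ := mem_image.1 hd
      exact mem_filter.2 ⟨(htop s).2 (mem_range.1 hs), Or.inl hlt⟩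
    omega
  · have hcL : c.2 < L := (htop c.2).1 (by rwa [← hrow])
    have : readRank B c = #(B.filter (fun d => d.1 = r ∧ d.2 < c.2)) :=
      congrArg card (filter_congr fun d hd => by have := hrows d hd; omega)
    rw [this, card_filter_row_col_lt htop hcL.le]
    omega

end TopRow

lemma runIdx_one {μ : YoungDiagram} {T : ℕ × ℕ → ℕ} : runIdx μ T 1 = 1 := by
  simp [runIdx]

lemma one_le_runIdx {μ : YoungDiagram} {T : ℕ × ℕ → ℕ} (v : ℕ) : 1 ≤ runIdx μ T v :=
  Nat.le_add_right 1 _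

lemma runIdx_mono {μ : YoungDiagram} {T : ℕ × ℕ → ℕ} : Monotone (runIdx μ T) := fun _ _ h =>
  Nat.add_le_add_left (card_le_card (filter_subset_filter _ (Ico_subset_Ico le_rfl h))) 1

lemma runIdx_succ {μ : YoungDiagram} {T : ℕ × ℕ → ℕ} {v : ℕ} (hv : 1 ≤ v) :
    runIdx μ T (v + 1) = runIdx μ T v + if Precedes μ T (v + 1) v then 1 else 0 := by
  unfold runIdx
  rw [Nat.Ico_succ_right_eq_insert_Ico hv, filter_insert]
  split_ifs
  · rw [card_insert_of_notMem (by simp)]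
    omega
  · rfl

lemma runIdx_succ_le {μ : YoungDiagram} {T : ℕ × ℕ → ℕ} (v : ℕ) :
    runIdx μ T (v + 1) ≤ runIdx μ T v + 1 := by
  rcases Nat.eq_zero_or_pos v with rfl | hv
  · simp [runIdx]
  · rw [runIdx_succ hv]
    split_ifs <;> omega

lemma exists_inverse_descent_of_runIdx_eq {μ : YoungDiagram} {T : ℕ × ℕ → ℕ} {m w : ℕ}
    (hm : 2 ≤ m) (hw : runIdx μ T w = m) :
    ∃ u, 1 ≤ u ∧ u + 1 ≤ w ∧ runIdx μ T (u + 1) = m ∧ runIdx μ T u + 1 = m ∧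
      Precedes μ T (u + 1) u := by
  have hex : ∃ v, runIdx μ T v = m := ⟨w, hw⟩
  obtain ⟨v, hv, hmin⟩ : ∃ v, runIdx μ T v = m ∧ ∀ v' < v, runIdx μ T v' ≠ m :=
    ⟨Nat.find hex, Nat.find_spec hex, fun _ h => Nat.find_min hex h⟩
  have hvw : v ≤ w := not_lt.1 fun h => hmin w h hw
  obtain ⟨u, rfl⟩ : ∃ u, v = u + 1 := Nat.exists_eq_succ_of_ne_zero (by
    rintro rfl
    simp [runIdx] at hv
    omega)
  have hu : 1 ≤ u := Nat.one_le_iff_ne_zero.2 (by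
    rintro rfl
    rw [runIdx_one] at hv
    omega)
  have hstep := runIdx_succ (μ := μ) (T := T) hu
  have hprec : Precedes μ T (u + 1) u := by
    by_contra h
    rw [if_neg h] at hstep
    exact hmin u (by omega) (by omega)
  rw [if_pos hprec] at hstep
  exact ⟨u, hu, hvw, hv, by omega, hprec⟩

namespace IsSYT

variable {n : ℕ} {μ : YoungDiagram} {T : ℕ × ℕ → ℕ}

lemma val_mem_Icc (hT : IsSYT n μ T) {c : ℕ × ℕ} (hc : c ∈ μ.cells) : T c ∈ Set.Icc 1 n :=
  hT.2.1.mapsTo hc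

lemma shape_unique {ν : YoungDiagram} (hμ : IsSYT n μ T) (hν : IsSYT n ν T) : μ = ν := by
  have sub : ∀ {μ ν : YoungDiagram}, IsSYT n μ T → IsSYT n ν T → μ.cells ⊆ ν.cells :=
    fun hμ hν c hc => by_contra fun h => by
      have := hν.1 c h
      have := (hμ.val_mem_Icc hc).1
      omega
  exact YoungDiagram.ext (Subset.antisymm (sub hμ hν) (sub hν hμ))

lemma precedes_iff (hT : IsSYT n μ T) {c d : ℕ × ℕ} (hc : c ∈ μ.cells) (hd : d ∈ μ.cells) :
    Precedes μ T (T c) (T d) ↔ ReadsBefore c d := by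
  refine ⟨fun ⟨c', hc', d', hd', hcc, hdd, h⟩ => ?_, fun h => ⟨c, hc, d, hd, rfl, rfl, h⟩⟩
  rwa [← hT.2.1.injOn hc' hc hcc, ← hT.2.1.injOn hd' hd hdd]

lemma precedes_or_precedes (hT : IsSYT n μ T) {u v : ℕ} (hu : u ∈ Set.Icc 1 n)
    (hv : v ∈ Set.Icc 1 n) (huv : u ≠ v) : Precedes μ T u v ∨ Precedes μ T v u := by
  obtain ⟨c, hc, rfl⟩ := hT.2.1.surjOn hu
  obtain ⟨d, hd, rfl⟩ := hT.2.1.surjOn hv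
  rw [hT.precedes_iff hc hd, hT.precedes_iff hd hc]
  rcases readsBefore_trichotomy c d with rfl | h | h
  · exact absurd rfl huv
  · exact Or.inl h
  · exact Or.inr h

lemma precedes_asymm (hT : IsSYT n μ T) {u v : ℕ} (h : Precedes μ T u v) :
    ¬ Precedes μ T v u := by
  obtain ⟨c, hc, d, hd, rfl, rfl, h⟩ := h
  rw [hT.precedes_iff hd hc]
  exact ReadsBefore.asymm h

lemma precedes_trans (hT : IsSYT n μ T) {u v w : ℕ} (h : Precedes μ T u v)
    (h' : Precedes μ T v w) : Precedes μ T u w := by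
  obtain ⟨c, hc, d, hd, rfl, rfl, hcd⟩ := h
  obtain ⟨d', hd', e, he, hdd, rfl, hde⟩ := h'
  obtain rfl := hT.2.1.injOn hd' hd hdd
  exact ⟨c, hc, e, he, rfl, rfl, ReadsBefore.trans hcd hde⟩

lemma precedes_succ (hT : IsSYT n μ T) {v : ℕ} (hv : 1 ≤ v) (hvn : v + 1 ≤ n)
    (hrun : runIdx μ T (v + 1) = runIdx μ T v) : Precedes μ T v (v + 1) := by
  refine (hT.precedes_or_precedes ⟨hv, by omega⟩ ⟨by omega, hvn⟩ (by omega)).resolve_right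
    fun h => ?_
  rw [runIdx_succ hv, if_pos h] at hrun
  omega

lemma precedes_of_runIdx_eq (hT : IsSYT n μ T) {u w : ℕ} (hu : 1 ≤ u) (hw : w ≤ n)
    (huw : u < w) (hrun : runIdx μ T u = runIdx μ T w) : Precedes μ T u w := by
  induction w, huw using Nat.le_induction with
  | base => exact hT.precedes_succ hu hw hrun.symm
  | succ v huv ih =>
    have hrun' : runIdx μ T u = runIdx μ T v :=
      le_antisymm (runIdx_mono (by omega)) (hrun ▸ runIdx_mono (Nat.le_succ v))
    exact hT.precedes_trans (ih (by omega) hrun')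
      (hT.precedes_succ (by omega) hw (hrun' ▸ hrun).symm)

lemma runIdx_lt_of_precedes (hT : IsSYT n μ T) {u w : ℕ} (hu : 1 ≤ u) (hw : w ≤ n)
    (huw : u < w) (h : Precedes μ T w u) : runIdx μ T u < runIdx μ T w :=
  lt_of_le_of_ne (runIdx_mono (le_of_lt huw)) fun hrun =>
    hT.precedes_asymm h (hT.precedes_of_runIdx_eq hu hw huw hrun)

lemma val_lt_of_col_lt (hT : IsSYT n μ T) {r s s' : ℕ} (hss : s' < s) (h : (r, s) ∈ μ) :
    T (r, s') < T (r, s) := by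
  induction s, hss using Nat.le_induction with
  | base => exact hT.2.2.1 r s' h
  | succ s _ ih => exact (ih (μ.up_left_mem le_rfl (Nat.le_succ s) h)).trans (hT.2.2.1 r s h)

lemma runIdx_le_of_col_le (hT : IsSYT n μ T) {r s s' : ℕ} (hss : s' ≤ s) (h : (r, s) ∈ μ) :
    runIdx μ T (T (r, s')) ≤ runIdx μ T (T (r, s)) := by
  rcases hss.eq_or_lt with rfl | hlt
  · rfl
  · exact runIdx_mono (hT.val_lt_of_col_lt hlt h).le

lemma runIdx_lt_of_row_succ (hT : IsSYT n μ T) {r s : ℕ} (h : (r + 1, s) ∈ μ) :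
    runIdx μ T (T (r, s)) < runIdx μ T (T (r + 1, s)) := by
  have hm : (r, s) ∈ μ.cells := μ.up_left_mem (Nat.le_succ r) le_rfl h
  refine hT.runIdx_lt_of_precedes (hT.val_mem_Icc hm).1 (hT.val_mem_Icc h).2 (hT.2.2.2 r s h) ?_
  rw [hT.precedes_iff h hm]
  exact Or.inl (Nat.lt_succ_self r)

lemma runIdx_add_le (hT : IsSYT n μ T) {r s d : ℕ} (h : (r + d, s) ∈ μ) :
    runIdx μ T (T (r, s)) + d ≤ runIdx μ T (T (r + d, s)) := by
  induction d with
  | zero => rfl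
  | succ d ih =>
    show _ ≤ runIdx μ T (T (r + d + 1, s))
    have := hT.runIdx_lt_of_row_succ (r := r + d) h
    have := ih (μ.up_left_mem (Nat.le_succ _) le_rfl h)
    omega

lemma row_add_one_le_runIdx (hT : IsSYT n μ T) {c : ℕ × ℕ} (hc : c ∈ μ.cells) :
    c.1 + 1 ≤ runIdx μ T (T c) := by
  obtain ⟨r, s⟩ := c
  have := hT.runIdx_add_le (r := 0) (d := r) (s := s) (by rwa [Nat.zero_add])
  rw [Nat.zero_add] at this
  have := one_le_runIdx (μ := μ) (T := T) (T (0, s))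
  dsimp only
  omega

lemma val_lt_iff (hT : IsSYT n μ T) {c d : ℕ × ℕ} (hc : c ∈ μ.cells) (hd : d ∈ μ.cells) :
    T c < T d ↔ runIdx μ T (T c) < runIdx μ T (T d) ∨
      (runIdx μ T (T c) = runIdx μ T (T d) ∧ ReadsBefore c d) := by
  have hc' := hT.val_mem_Icc hc
  have hd' := hT.val_mem_Icc hd
  constructor
  · intro h
    rcases (runIdx_mono h.le : runIdx μ T (T c) ≤ _).lt_or_eq with hlt | heq
    · exact Or.inl hlt
    · exact Or.inr ⟨heq, (hT.precedes_iff hc hd).1 (hT.precedes_of_runIdx_eq hc'.1 hd'.2 h heq)⟩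
  · rintro (hlt | ⟨heq, hcd⟩)
    · exact not_le.1 fun h => absurd (runIdx_mono h) (not_le.2 hlt)
    · refine not_le.1 fun h => ?_
      rcases h.lt_or_eq with hlt | heq'
      · exact ReadsBefore.asymm hcd ((hT.precedes_iff hd hc).1
          (hT.precedes_of_runIdx_eq hd'.1 hc'.2 hlt heq.symm))
      · obtain rfl := hT.2.1.injOn hd hc heq'
        exact ReadsBefore.asymm hcd hcd

lemma card_filter_val (hT : IsSYT n μ T) (p : ℕ → Prop) [DecidablePred p] :
    #{c ∈ μ.cells | p (T c)} = #{v ∈ Icc 1 n | p v} := by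
  refine card_nbij T (fun c hc => ?_) (hT.2.1.injOn.mono (filter_subset _ _)) (fun v hv => ?_)
  · rw [coe_filter] at hc ⊢
    exact ⟨Finset.mem_Icc.2 (hT.val_mem_Icc hc.1), hc.2⟩
  · rw [coe_filter] at hv
    obtain ⟨c, hc, rfl⟩ := hT.2.1.surjOn (Finset.mem_Icc.1 hv.1)
    exact ⟨c, by rw [coe_filter]; exact ⟨hc, hv.2⟩, rfl⟩

lemma val_eq_card (hT : IsSYT n μ T) {c : ℕ × ℕ} (hc : c ∈ μ.cells) :
    T c = #{d ∈ μ.cells | T d ≤ T c} := by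
  rw [hT.card_filter_val (· ≤ T c)]
  have : {v ∈ Icc 1 n | v ≤ T c} = Icc 1 (T c) := by
    ext v
    simp only [mem_filter, mem_Icc]
    have := (hT.val_mem_Icc hc).2
    omega
  rw [this, Nat.card_Icc]
  omega

lemma eq_of_runIdx_eq {A B : ℕ × ℕ → ℕ} (hA : IsSYT n μ A) (hB : IsSYT n μ B)
    (h : ∀ c ∈ μ.cells, runIdx μ A (A c) = runIdx μ B (B c)) : A = B := by
  funext c
  by_cases hc : c ∈ μ.cells
  · rw [hA.val_eq_card hc, hB.val_eq_card hc]
    congr 1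
    refine filter_congr fun d hd => ?_
    rw [le_iff_lt_or_eq, le_iff_lt_or_eq, hA.val_lt_iff hd hc, hB.val_lt_iff hd hc, h d hd,
      h c hc, hA.2.1.injOn.eq_iff hd hc, hB.2.1.injOn.eq_iff hd hc]
  · rw [hA.1 c hc, hB.1 c hc]

lemma bsum_eq (hT : IsSYT n μ T) (m : ℕ) :
    bsum n μ T m = #{c ∈ μ.cells | runIdx μ T (T c) ≤ m} :=
  (hT.card_filter_val (runIdx μ T · ≤ m)).symm

lemma betaRun_eq (hT : IsSYT n μ T) {m : ℕ} (hm : 1 ≤ m) :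
    betaRun n μ T m = #{c ∈ μ.cells | runIdx μ T (T c) = m} := by
  have hsplit : {c ∈ μ.cells | runIdx μ T (T c) ≤ m} =
      {c ∈ μ.cells | runIdx μ T (T c) ≤ m - 1} ∪ {c ∈ μ.cells | runIdx μ T (T c) = m} := by
    rw [← filter_or]
    exact filter_congr fun c _ => by omega
  rw [betaRun, hT.bsum_eq, hT.bsum_eq, hsplit,
    card_union_of_disjoint (disjoint_filter.2 fun _ _ _ _ => by omega)]
  omega

lemma firstRunsSS_iff (hT : IsSYT n μ T) (j : ℕ) :
    FirstRunsSS n μ T j ↔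
      ∀ c ∈ μ.cells, runIdx μ T (T c) ≤ j → c.1 = runIdx μ T (T c) - 1 :=
  ⟨fun h c hc hle => h (T c) (hT.val_mem_Icc hc).1 (hT.val_mem_Icc hc).2 hle c hc rfl,
    fun h _ _ _ hle c hc hTc => hTc ▸ h c hc (hTc ▸ hle)⟩

lemma firstRunsSS_one (hT : IsSYT n μ T) : FirstRunsSS n μ T 1 :=
  (hT.firstRunsSS_iff 1).2 fun c hc hle => by
    have := hT.row_add_one_le_runIdx hc
    omega

lemma mem_and_runIdx_le_iff (hT : IsSYT n μ T) (m r s : ℕ) :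
    (r, s) ∈ μ.cells ∧ runIdx μ T (T (r, s)) ≤ m ↔ s < shapeRow μ T m (r + 1) := by
  set S := {c ∈ μ.cells | runIdx μ T (T c) ≤ m ∧ c.1 = r + 1 - 1}
  have hcol : ∀ t, t ∈ S.image Prod.snd ↔ (r, t) ∈ μ.cells ∧ runIdx μ T (T (r, t)) ≤ m := by
    intro t
    simp only [S, mem_image, mem_filter, Nat.add_sub_cancel]
    exact ⟨fun ⟨c, ⟨hc, hle, hrow⟩, ht⟩ => ht ▸ hrow ▸ ⟨hc, hle⟩,
      fun h => ⟨_, ⟨h.1, h.2, rfl⟩, rfl⟩⟩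
  have hcard : shapeRow μ T m (r + 1) = #(S.image Prod.snd) := by
    refine (card_image_of_injOn fun c hc d hd h => Prod.ext ?_ h).symm
    have := (mem_filter.1 hc).2.2
    have := (mem_filter.1 hd).2.2
    omega
  have hlower : IsLowerSet ((S.image Prod.snd : Finset ℕ) : Set ℕ) := by
    intro t t' ht' ht
    rw [mem_coe, hcol] at ht ⊢
    exact ⟨μ.up_left_mem le_rfl ht' ht.1, (hT.runIdx_le_of_col_le ht' ht.1).trans ht.2⟩
  rw [hcard, ← mem_iff_lt_card_of_isLowerSet hlower, hcol]

lemma shapeRow_antitone (hT : IsSYT n μ T) (j : ℕ) {r r' : ℕ} (hr : 1 ≤ r) (hrr : r ≤ r') :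
    shapeRow μ T j r' ≤ shapeRow μ T j r := by
  obtain ⟨p, rfl⟩ : ∃ p, r = p + 1 := ⟨r - 1, by omega⟩
  obtain ⟨d, rfl⟩ : ∃ d, r' = p + d + 1 := ⟨r' - p - 1, by omega⟩
  by_contra! h
  obtain ⟨hmem, hrun⟩ := (hT.mem_and_runIdx_le_iff j (p + d) _).2 h
  have hmem' : (p, shapeRow μ T j (p + 1)) ∈ μ.cells := μ.up_left_mem (by omega) le_rfl hmem
  have := hT.runIdx_add_le hmem
  exact lt_irrefl _ ((hT.mem_and_runIdx_le_iff j p _).1 ⟨hmem', by omega⟩)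

lemma shapeRow_succ_self (hT : IsSYT n μ T) (j : ℕ) : shapeRow μ T j (j + 1) = 0 := by
  rw [shapeRow, card_eq_zero, filter_eq_empty_iff]
  rintro c hc ⟨hle, hrow⟩
  have := hT.row_add_one_le_runIdx hc
  omega

lemma shapeRow_self_subset (hT : IsSYT n μ T) (j : ℕ) :
    {c ∈ μ.cells | runIdx μ T (T c) ≤ j ∧ c.1 = j - 1} ⊆
      {c ∈ μ.cells | runIdx μ T (T c) = j} := by
  intro c hc
  rw [mem_filter] at hc ⊢
  have := hT.row_add_one_le_runIdx hc.1
  have := one_le_runIdx (μ := μ) (T := T) (T c)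
  exact ⟨hc.1, by omega⟩

end IsSYT

lemma IsSuperstandard.firstRunsSS {n : ℕ} {μ : YoungDiagram} {T : ℕ × ℕ → ℕ}
    (h : IsSuperstandard μ T) (j : ℕ) : FirstRunsSS n μ T j :=
  fun _ _ _ _ c hc hTc => hTc ▸ h c hc

lemma mem_belowCells {μ : YoungDiagram} {T : ℕ × ℕ → ℕ} {a j : ℕ} {c : ℕ × ℕ} :
    c ∈ belowCells μ T a j ↔
      c ∈ μ.cells ∧ (runIdx μ T (T c) = a ∨ runIdx μ T (T c) = j) ∧ c.1 + 1 < j :=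
  mem_filter

lemma disjoint_belowCells_top_row {μ : YoungDiagram} {T : ℕ × ℕ → ℕ} {a j : ℕ} :
    Disjoint (belowCells μ T a j) {c ∈ μ.cells | runIdx μ T (T c) ≤ j ∧ c.1 = j - 1} :=
  disjoint_left.2 fun c h1 h2 => by
    have := (mem_belowCells.1 h1).2.2
    have := (mem_filter.1 h2).2.2
    omega

lemma Redistrib.runIdx_of_mem_belowCells {μ : YoungDiagram} {T T' : ℕ × ℕ → ℕ} {a j k : ℕ}
    (hR : Redistrib μ T T' a j k) {c : ℕ × ℕ} (hc : c ∈ belowCells μ T a j) :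
    runIdx μ T' (T' c) = if readRank (belowCells μ T a j) c < k then a else j :=
  hR.2.2 c hc

namespace SlinkData

variable {n i j : ℕ} {μ : YoungDiagram} {T T' : ℕ × ℕ → ℕ}

lemma row_eq_of_runIdx_lt (hd : SlinkData n μ T i j) (hT : IsSYT n μ T) {c : ℕ × ℕ}
    (hc : c ∈ μ.cells) (hlt : runIdx μ T (T c) < j) : c.1 = runIdx μ T (T c) - 1 :=
  (hT.firstRunsSS_iff _).1 (hd.2.2.1 _ hlt) c hc le_rfl

lemma two_le (hd : SlinkData n μ T i j) (hT : IsSYT n μ T) : 2 ≤ j := by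
  by_contra h
  obtain rfl : j = 1 := by have := hd.1; omega
  exact hd.2.1 hT.firstRunsSS_one

lemma exists_runIdx_eq_j (hd : SlinkData n μ T i j) (hT : IsSYT n μ T) :
    ∃ c ∈ μ.cells, runIdx μ T (T c) = j := by
  obtain ⟨c, hc, hle, hne⟩ :
      ∃ c ∈ μ.cells, runIdx μ T (T c) ≤ j ∧ c.1 ≠ runIdx μ T (T c) - 1 := by
    by_contra! h
    exact hd.2.1 ((hT.firstRunsSS_iff j).2 h)
  exact ⟨c, hc, hle.antisymm (not_lt.1 fun hlt => hne (hd.row_eq_of_runIdx_lt hT hc hlt))⟩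

lemma exists_runIdx_eq (hd : SlinkData n μ T i j) (hT : IsSYT n μ T) {m : ℕ} (hm : 1 ≤ m)
    (hmj : m ≤ j) : ∃ c ∈ μ.cells, runIdx μ T (T c) = m := by
  obtain ⟨c, hc, hcj⟩ := hd.exists_runIdx_eq_j hT
  obtain ⟨v, hv1, hvc, hv⟩ := Nat.exists_eq_of_map_succ_le runIdx_succ_le
    (hT.val_mem_Icc hc).1 (by rwa [runIdx_one]) (hcj ▸ hmj)
  obtain ⟨d, hd', rfl⟩ := hT.2.1.surjOn ⟨hv1, hvc.trans (hT.val_mem_Icc hc).2⟩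
  exact ⟨d, hd', hv⟩

/-- The first value of run `j` is read before the last value of run `j - 1`, which lies in
row `j - 1`, and it cannot lie to its left; so it lies in row `j`. -/
lemma exists_runIdx_eq_j_top_row (hd : SlinkData n μ T i j) (hT : IsSYT n μ T) :
    ∃ c ∈ μ.cells, runIdx μ T (T c) = j ∧ c.1 = j - 1 := by
  obtain ⟨c, hc, hcj⟩ := hd.exists_runIdx_eq_j hT
  obtain ⟨u, -, -, hv, hu, cv, hcv, cu, hcu, hTv, hTu, hb⟩ :=
    exists_inverse_descent_of_runIdx_eq (hd.two_le hT) hcj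
  have hrowu := hd.row_eq_of_runIdx_lt hT hcu (by rw [hTu]; omega)
  rw [hTu] at hrowu
  refine ⟨cv, hcv, hTv ▸ hv, ?_⟩
  have := hT.row_add_one_le_runIdx hcv
  rw [hTv] at this
  rcases hb with h | ⟨hrow, hcol⟩
  · omega
  · have := hT.val_lt_of_col_lt hcol (r := cu.1) hcu
    rw [show (cu.1, cv.2) = cv from Prod.ext hrow.symm rfl, Prod.mk.eta, hTv, hTu] at this
    omega

lemma one_le_shapeRow (hd : SlinkData n μ T i j) (hT : IsSYT n μ T) {r : ℕ} (hr : 1 ≤ r)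
    (hrj : r ≤ j) : 1 ≤ shapeRow μ T j r := by
  obtain ⟨c, hc, hrun, hrow⟩ : ∃ c ∈ μ.cells, runIdx μ T (T c) ≤ j ∧ c.1 = r - 1 := by
    rcases hrj.lt_or_eq with hlt | rfl
    · obtain ⟨c, hc, hcr⟩ := hd.exists_runIdx_eq hT hr hlt.le
      exact ⟨c, hc, hcr ▸ hlt.le, hcr ▸ hd.row_eq_of_runIdx_lt hT hc (hcr ▸ hlt)⟩
    · obtain ⟨c, hc, hcj, hrow⟩ := hd.exists_runIdx_eq_j_top_row hT
      exact ⟨c, hc, hcj.le, hrow⟩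
  exact card_pos.2 ⟨c, mem_filter.2 ⟨hc, hrun, hrow⟩⟩

lemma mem_and_runIdx_eq_iff (hd : SlinkData n μ T i j) (hT : IsSYT n μ T) {m : ℕ} (hm : 1 ≤ m)
    (hmj : m < j) (c : ℕ × ℕ) :
    c ∈ μ.cells ∧ runIdx μ T (T c) = m ↔ c.1 = m - 1 ∧ c.2 < betaRun n μ T m := by
  have hrun : ∀ c ∈ μ.cells, runIdx μ T (T c) = m ↔ runIdx μ T (T c) ≤ m ∧ c.1 = m - 1 :=
    fun c hc => by
      have := hT.row_add_one_le_runIdx hc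
      have := hd.row_eq_of_runIdx_lt hT hc
      omega
  have hβ : betaRun n μ T m = shapeRow μ T m (m - 1 + 1) := by
    rw [hT.betaRun_eq hm, shapeRow, Nat.sub_add_cancel hm]
    exact congrArg card (filter_congr hrun)
  obtain ⟨r, s⟩ := c
  rw [hβ, ← hT.mem_and_runIdx_le_iff]
  constructor
  · rintro ⟨hc, hcm⟩
    obtain ⟨hle, rfl⟩ := (hrun _ hc).1 hcm
    exact ⟨rfl, hc, hle⟩
  · rintro ⟨rfl, hc, hle⟩
    exact ⟨hc, (hrun _ hc).2 ⟨hle, rfl⟩⟩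

lemma shapeRow_le_betaRun (hd : SlinkData n μ T i j) (hT : IsSYT n μ T) {m : ℕ} (hm : 1 ≤ m)
    (hmj : m < j) : shapeRow μ T j j ≤ betaRun n μ T m := by
  by_contra! h
  obtain ⟨hmem, hrun⟩ := (hT.mem_and_runIdx_le_iff j (j - 1) _).2
    (by rwa [Nat.sub_add_cancel (by omega)])
  have hmem' : (m - 1, betaRun n μ T m) ∈ μ.cells := μ.up_left_mem (by omega) le_rfl hmem
  have hchain := hT.runIdx_add_le (r := m - 1) (d := j - m)
    (by rwa [show m - 1 + (j - m) = j - 1 by omega])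
  rw [show m - 1 + (j - m) = j - 1 by omega] at hchain
  have := hT.row_add_one_le_runIdx hmem'
  have := ((hd.mem_and_runIdx_eq_iff hT hm hmj _).1 ⟨hmem', by dsimp at this; omega⟩).2
  exact lt_irrefl _ this

lemma betaRun_succ_le (hd : SlinkData n μ T i j) (hT : IsSYT n μ T) {m : ℕ} (hm : 1 ≤ m)
    (hmj : m + 1 < j) : betaRun n μ T (m + 1) ≤ betaRun n μ T m := by
  by_contra! h
  obtain ⟨hmem, hrun⟩ := (hd.mem_and_runIdx_eq_iff hT (by omega) hmj (m, betaRun n μ T m)).2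
    ⟨rfl, h⟩
  have hmem' : (m - 1, betaRun n μ T m) ∈ μ.cells := μ.up_left_mem (by omega) le_rfl hmem
  have hvert := hT.runIdx_lt_of_row_succ (r := m - 1) (by rwa [Nat.sub_add_cancel hm])
  rw [Nat.sub_add_cancel hm, hrun] at hvert
  have := hT.row_add_one_le_runIdx hmem'
  have := ((hd.mem_and_runIdx_eq_iff hT hm (by omega) _).1 ⟨hmem', by dsimp at this; omega⟩).2
  exact lt_irrefl _ this

lemma betaRun_le_shapeRow (hd : SlinkData n μ T i j) (hT : IsSYT n μ T) {m : ℕ} (hm : 1 ≤ m)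
    (hmj : m < j) : betaRun n μ T m ≤ shapeRow μ T j m := by
  rw [hT.betaRun_eq hm]
  refine card_le_card fun c hc => ?_
  rw [mem_filter] at hc ⊢
  exact ⟨hc.1, by omega, by rw [hd.row_eq_of_runIdx_lt hT hc.1 (by omega), hc.2]⟩

/-- If `i = j`, minimality of `i` forces `β_j ≤ μ_j`, so that run `j` fills row `j` and the
first `j` runs would be superstandard. -/
lemma i_lt_j (hd : SlinkData n μ T i j) (hT : IsSYT n μ T) : i < j := by
  have hj := hd.two_le hT
  have hij : i ≤ j := by
    by_contra! h
    have := hd.2.2.2.2.2 j hd.1 h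
    rw [hT.shapeRow_succ_self] at this
    omega
  refine hij.lt_of_ne fun hij => hd.2.1 ?_
  subst hij
  have hmin := hd.2.2.2.2.2 (i - 1) (by omega) (by omega)
  rw [Nat.sub_add_cancel (by omega)] at hmin
  have htop := eq_of_subset_of_card_le (hT.shapeRow_self_subset i)
    (by rw [← hT.betaRun_eq hd.1]; unfold shapeRow at hmin; omega)
  rw [hT.firstRunsSS_iff]
  intro c hc hle
  rcases hle.lt_or_eq with hlt | heq
  · exact hd.row_eq_of_runIdx_lt hT hc hlt
  · have : c ∈ {c ∈ μ.cells | runIdx μ T (T c) = i} := mem_filter.2 ⟨hc, heq⟩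
    rw [← htop, mem_filter] at this
    rw [heq]
    exact this.2.2

lemma lt_betaRun_add (hd : SlinkData n μ T i j) (hT : IsSYT n μ T) :
    j < betaRun n μ T j + i := by
  have := hd.one_le_shapeRow hT (r := i + 1) (by omega) (hd.i_lt_j hT)
  have := hd.2.2.2.2.1
  omega

lemma card_belowCells (hd : SlinkData n μ T i j) (hT : IsSYT n μ T) :
    #(belowCells μ T i j) + shapeRow μ T j j = betaRun n μ T i + betaRun n μ T j := by
  have hij := hd.i_lt_j hT
  have hunion : {c ∈ μ.cells | runIdx μ T (T c) = i} ∪ {c ∈ μ.cells | runIdx μ T (T c) = j} =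
      belowCells μ T i j ∪ {c ∈ μ.cells | runIdx μ T (T c) ≤ j ∧ c.1 = j - 1} := by
    rw [belowCells, ← filter_or, ← filter_or]
    refine filter_congr fun c hc => ?_
    have := hT.row_add_one_le_runIdx hc
    have := hd.row_eq_of_runIdx_lt hT hc
    omega
  rw [hT.betaRun_eq hd.2.2.2.1, hT.betaRun_eq hd.1, shapeRow,
    ← card_union_of_disjoint (disjoint_filter.2 fun _ _ _ _ => by omega), hunion,
    card_union_of_disjoint disjoint_belowCells_top_row]

lemma betaRun_add_sub_lt_card_belowCells (hd : SlinkData n μ T i j) (hT : IsSYT n μ T) :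
    betaRun n μ T j + i - j < #(belowCells μ T i j) := by
  have := hd.card_belowCells hT
  have := hd.shapeRow_le_betaRun hT hd.2.2.2.1 (hd.i_lt_j hT)
  have := hd.i_lt_j hT
  have := hd.lt_betaRun_add hT
  omega

lemma mem_belowCells_row_iff (hd : SlinkData n μ T i j) (hT : IsSYT n μ T) (s : ℕ) :
    (i - 1, s) ∈ belowCells μ T i j ↔ s < shapeRow μ T j i := by
  have hij := hd.i_lt_j hT
  have hrow := hT.mem_and_runIdx_le_iff j (i - 1) s
  rw [Nat.sub_add_cancel hd.2.2.2.1] at hrow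
  rw [mem_belowCells, ← hrow]
  refine and_congr_right fun hc => ?_
  have hlow := hT.row_add_one_le_runIdx hc
  have hrun := hd.row_eq_of_runIdx_lt hT hc
  have := hd.2.2.2.1
  dsimp only at hlow hrun ⊢
  omega

lemma runIdx_of_mem_belowCells (hd : SlinkData n μ T i j) (hT : IsSYT n μ T) {c : ℕ × ℕ}
    (hc : c ∈ belowCells μ T i j) :
    runIdx μ T (T c) = if c.1 = i - 1 ∧ c.2 < betaRun n μ T i then i else j := by
  obtain ⟨hcμ, hrun, -⟩ := mem_belowCells.1 hc
  have hiff := hd.mem_and_runIdx_eq_iff hT hd.2.2.2.1 (hd.i_lt_j hT) c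
  split_ifs with h
  · exact (hiff.2 h).2
  · exact hrun.resolve_left fun hi => h (hiff.1 ⟨hcμ, hi⟩)

lemma runIdx_redistrib_of_not_mem (hd : SlinkData n μ T i j) (hT : IsSYT n μ T) {k : ℕ}
    (hR : Redistrib μ T T' i j k) {c : ℕ × ℕ} (hc : c ∈ μ.cells)
    (hcB : c ∉ belowCells μ T i j) : runIdx μ T' (T' c) = runIdx μ T (T c) := by
  by_cases hj : runIdx μ T (T c) = j
  · rw [hj]
    exact hR.2.1 c hc hj (not_lt.1 fun h => hcB (mem_belowCells.2 ⟨hc, Or.inr hj, h⟩))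
  · have hi : runIdx μ T (T c) ≠ i := by
      intro hi
      have hij := hd.i_lt_j hT
      have hrow := hd.row_eq_of_runIdx_lt hT hc (by omega)
      have hlt : c.1 + 1 < j := by
        have := hd.2.2.2.1
        omega
      exact hcB (mem_belowCells.2 ⟨hc, Or.inl hi, hlt⟩)
    exact hR.1 c hc hi hj

/-- The first cell of `belowCells` in reading order is handed to run `i` of `T'`, so it lies
in row `i` or below. -/
lemma row_le_of_mem_belowCells (hd : SlinkData n μ T i j) (hT : IsSYT n μ T)
    (hT' : IsSYT n μ T') (hR : Redistrib μ T T' i j (betaRun n μ T j + i - j)) {c : ℕ × ℕ}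
    (hc : c ∈ belowCells μ T i j) : c.1 ≤ i - 1 := by
  obtain ⟨c₀, hc₀, hrank, hmax⟩ := exists_readRank_eq_zero ⟨c, hc⟩
  have hrun := hR.runIdx_of_mem_belowCells hc₀
  have := hd.lt_betaRun_add hT
  rw [hrank, if_pos (show 0 < betaRun n μ T j + i - j by omega)] at hrun
  have := hT'.row_add_one_le_runIdx (mem_belowCells.1 hc₀).1
  have := hmax c hc
  omega

lemma betaRun_add_sub_le_shapeRow (hd : SlinkData n μ T i j) (hT : IsSYT n μ T)
    (hT' : IsSYT n μ T') (hR : Redistrib μ T T' i j (betaRun n μ T j + i - j)) :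
    betaRun n μ T j + i - j ≤ shapeRow μ T j i := by
  rcases hd.2.2.2.1.lt_or_eq with hi | rfl
  · have := hd.2.2.2.2.2 (i - 1) (by omega) (by omega)
    rw [Nat.sub_add_cancel hi.le] at this
    omega
  · have hB : belowCells μ T 1 j ⊆ (range (shapeRow μ T j 1)).image (Prod.mk 0) := by
      intro c hc
      have hrow := hd.row_le_of_mem_belowCells hT hT' hR hc
      have hc0 : c = (1 - 1, c.2) := Prod.ext (by omega) rfl
      refine mem_image.2 ⟨c.2, mem_range.2 ((hd.mem_belowCells_row_iff hT c.2).1 (hc0 ▸ hc)), ?_⟩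
      rw [hc0]
    have := card_le_card hB
    rw [card_image_of_injective _ (Prod.mk_right_injective 0), card_range] at this
    have := hd.betaRun_add_sub_lt_card_belowCells hT
    omega

lemma runIdx_redistrib_of_mem (hd : SlinkData n μ T i j) (hT : IsSYT n μ T)
    (hT' : IsSYT n μ T') (hR : Redistrib μ T T' i j (betaRun n μ T j + i - j)) {c : ℕ × ℕ}
    (hc : c ∈ belowCells μ T i j) :
    runIdx μ T' (T' c) = if c.1 = i - 1 ∧ c.2 < betaRun n μ T j + i - j then i else j := by
  rw [hR.runIdx_of_mem_belowCells hc]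
  exact if_congr (readRank_lt_iff (fun _ => hd.row_le_of_mem_belowCells hT hT' hR)
    (hd.mem_belowCells_row_iff hT) (hd.betaRun_add_sub_le_shapeRow hT hT' hR) hc) rfl rfl

lemma belowCells_redistrib (hd : SlinkData n μ T i j) (hT : IsSYT n μ T)
    (hT' : IsSYT n μ T') (hR : Redistrib μ T T' i j (betaRun n μ T j + i - j)) :
    belowCells μ T' i j = belowCells μ T i j := by
  ext c
  rw [mem_belowCells, mem_belowCells]
  refine and_congr_right fun hc => ?_
  by_cases hcB : c ∈ belowCells μ T i j
  · obtain ⟨-, hrun, hrow⟩ := mem_belowCells.1 hcB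
    rw [hd.runIdx_redistrib_of_mem hT hT' hR hcB]
    split_ifs <;> simp [hrun, hrow]
  · rw [hd.runIdx_redistrib_of_not_mem hT hR hc hcB]

lemma runIdx_redistrib_le_iff (hd : SlinkData n μ T i j) (hT : IsSYT n μ T)
    (hT' : IsSYT n μ T') (hR : Redistrib μ T T' i j (betaRun n μ T j + i - j)) {c : ℕ × ℕ}
    (hc : c ∈ μ.cells) : runIdx μ T' (T' c) ≤ j ↔ runIdx μ T (T c) ≤ j := by
  by_cases hcB : c ∈ belowCells μ T i j
  · have hij := hd.i_lt_j hT
    rw [hd.runIdx_redistrib_of_mem hT hT' hR hcB]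
    rcases (mem_belowCells.1 hcB).2.1 with h | h <;> rw [h] <;> split_ifs <;> omega
  · rw [hd.runIdx_redistrib_of_not_mem hT hR hc hcB]

lemma shapeRow_redistrib (hd : SlinkData n μ T i j) (hT : IsSYT n μ T)
    (hT' : IsSYT n μ T') (hR : Redistrib μ T T' i j (betaRun n μ T j + i - j)) (r : ℕ) :
    shapeRow μ T' j r = shapeRow μ T j r :=
  congrArg card (filter_congr fun _ hc =>
    and_congr_left' (hd.runIdx_redistrib_le_iff hT hT' hR hc))

lemma firstRunsSS_redistrib (hd : SlinkData n μ T i j) (hT : IsSYT n μ T)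
    (hT' : IsSYT n μ T') (hR : Redistrib μ T T' i j (betaRun n μ T j + i - j)) {j' : ℕ}
    (hj' : j' < j) : FirstRunsSS n μ T' j' := by
  rw [hT'.firstRunsSS_iff]
  intro c hc hle
  by_cases hcB : c ∈ belowCells μ T i j
  · have hrun := hd.runIdx_redistrib_of_mem hT hT' hR hcB
    split_ifs at hrun with h
    · rw [hrun]
      exact h.1
    · omega
  · rw [hd.runIdx_redistrib_of_not_mem hT hR hc hcB] at hle ⊢
    exact hd.row_eq_of_runIdx_lt hT hc (by omega)

lemma card_filter_belowCells_row (hd : SlinkData n μ T i j) (hT : IsSYT n μ T)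
    (hT' : IsSYT n μ T') (hR : Redistrib μ T T' i j (betaRun n μ T j + i - j)) :
    #((belowCells μ T i j).filter
      (fun c => c.1 = i - 1 ∧ c.2 < betaRun n μ T j + i - j)) = betaRun n μ T j + i - j :=
  card_filter_row_col_lt (hd.mem_belowCells_row_iff hT) (hd.betaRun_add_sub_le_shapeRow hT hT' hR)

lemma not_firstRunsSS_redistrib (hd : SlinkData n μ T i j) (hT : IsSYT n μ T)
    (hT' : IsSYT n μ T') (hR : Redistrib μ T T' i j (betaRun n μ T j + i - j)) :
    ¬ FirstRunsSS n μ T' j := by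
  obtain ⟨c, hcB, hc⟩ : ∃ c ∈ belowCells μ T i j,
      ¬ (c.1 = i - 1 ∧ c.2 < betaRun n μ T j + i - j) := by
    by_contra! h
    have := hd.card_filter_belowCells_row hT hT' hR
    rw [filter_true_of_mem h] at this
    have := hd.betaRun_add_sub_lt_card_belowCells hT
    omega
  have hrun := hd.runIdx_redistrib_of_mem hT hT' hR hcB
  rw [if_neg hc] at hrun
  obtain ⟨hcμ, -, hrow⟩ := mem_belowCells.1 hcB
  intro h
  have := (hT'.firstRunsSS_iff j).1 h c hcμ hrun.le
  omega

lemma filter_runIdx_redistrib_eq_j (hd : SlinkData n μ T i j) (hT : IsSYT n μ T)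
    (hT' : IsSYT n μ T') (hR : Redistrib μ T T' i j (betaRun n μ T j + i - j)) :
    {c ∈ μ.cells | runIdx μ T' (T' c) = j} =
      (belowCells μ T i j).filter
          (fun c => ¬ (c.1 = i - 1 ∧ c.2 < betaRun n μ T j + i - j)) ∪
        {c ∈ μ.cells | runIdx μ T (T c) ≤ j ∧ c.1 = j - 1} := by
  ext c
  rw [mem_union, mem_filter, mem_filter, mem_filter]
  by_cases hcB : c ∈ belowCells μ T i j
  · obtain ⟨hc, -, hrow⟩ := mem_belowCells.1 hcB
    rw [hd.runIdx_redistrib_of_mem hT hT' hR hcB]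
    split_ifs with h
    · refine iff_of_false (fun h' => (hd.i_lt_j hT).ne h'.2) ?_
      rintro (⟨-, h'⟩ | ⟨-, -, h'⟩)
      · exact h' h
      · omega
    · exact iff_of_true ⟨hc, rfl⟩ (Or.inl ⟨hcB, h⟩)
  · by_cases hc : c ∈ μ.cells
    · rw [hd.runIdx_redistrib_of_not_mem hT hR hc hcB]
      have hlow := hT.row_add_one_le_runIdx hc
      have hnot : runIdx μ T (T c) = j → ¬ c.1 + 1 < j :=
        fun h h' => hcB (mem_belowCells.2 ⟨hc, Or.inr h, h'⟩)
      simp only [hcB, hc, false_and, false_or, true_and]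
      omega
    · simp [hc, hcB]

lemma betaRun_redistrib (hd : SlinkData n μ T i j) (hT : IsSYT n μ T)
    (hT' : IsSYT n μ T') (hR : Redistrib μ T T' i j (betaRun n μ T j + i - j)) :
    betaRun n μ T' j + i = betaRun n μ T i + j := by
  have hcount := card_filter_add_card_filter_not (s := belowCells μ T i j)
    (fun c => c.1 = i - 1 ∧ c.2 < betaRun n μ T j + i - j)
  rw [hd.card_filter_belowCells_row hT hT' hR] at hcount
  have hB := hd.card_belowCells hT
  rw [shapeRow] at hB
  have := hd.lt_betaRun_add hT
  rw [hT'.betaRun_eq hd.1, hd.filter_runIdx_redistrib_eq_j hT hT' hR,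
    card_union_of_disjoint (disjoint_belowCells_top_row.mono_left (filter_subset _ _))]
  omega

lemma shapeRow_succ_le_betaRun (hd : SlinkData n μ T i j) (hT : IsSYT n μ T)
    (hT' : IsSYT n μ T') (hR : Redistrib μ T T' i j (betaRun n μ T j + i - j)) :
    shapeRow μ T j (i + 1) ≤ betaRun n μ T i := by
  have hij := hd.i_lt_j hT
  have hi := hd.2.2.2.1
  rcases (show i + 1 ≤ j from hij).lt_or_eq with hlt | heq
  · refine le_trans ?_ (hd.betaRun_succ_le hT hi hlt)
    rw [hT.betaRun_eq (by omega)]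
    refine card_le_card fun c hc => ?_
    obtain ⟨hcμ, hle, hrow⟩ := mem_filter.1 hc
    have hj : runIdx μ T (T c) ≠ j := fun hj => by
      have hlt' : c.1 + 1 < j := by omega
      have := hd.row_le_of_mem_belowCells hT hT' hR (mem_belowCells.2 ⟨hcμ, Or.inr hj, hlt'⟩)
      omega
    have := hd.row_eq_of_runIdx_lt hT hcμ (by omega)
    exact mem_filter.2 ⟨hcμ, by omega⟩
  · rw [heq]
    exact hd.shapeRow_le_betaRun hT hi hij

lemma redistrib (hd : SlinkData n μ T i j) (hT : IsSYT n μ T)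
    (hT' : IsSYT n μ T') (hR : Redistrib μ T T' i j (betaRun n μ T j + i - j)) :
    SlinkData n μ T' i j := by
  have hβ := hd.betaRun_redistrib hT hT' hR
  have hij := hd.i_lt_j hT
  refine ⟨hd.1, hd.not_firstRunsSS_redistrib hT hT' hR,
    fun _ h => hd.firstRunsSS_redistrib hT hT' hR h, hd.2.2.2.1, ?_, fun i' hi' hi'i => ?_⟩
  · rw [hd.shapeRow_redistrib hT hT' hR]
    have := hd.shapeRow_succ_le_betaRun hT hT' hR
    omega
  · rw [hd.shapeRow_redistrib hT hT' hR]
    have := hT.shapeRow_antitone j (r := i' + 1) (r' := i) (by omega) (by omega)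
    have := hd.betaRun_le_shapeRow hT hd.2.2.2.1 hij
    omega

lemma redistrib_symm (hd : SlinkData n μ T i j) (hT : IsSYT n μ T)
    (hT' : IsSYT n μ T') (hR : Redistrib μ T T' i j (betaRun n μ T j + i - j)) :
    Redistrib μ T' T i j (betaRun n μ T' j + i - j) := by
  have hij := hd.i_lt_j hT
  have hk : betaRun n μ T' j + i - j = betaRun n μ T i := by
    have := hd.betaRun_redistrib hT hT' hR
    omega
  rw [hk]
  refine ⟨fun c hc h1 h2 => ?_, fun c hc hj hrow => ?_, fun c hcB => ?_⟩
  · have hcB : c ∉ belowCells μ T i j := fun hcB => by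
      have := hd.runIdx_redistrib_of_mem hT hT' hR hcB
      split_ifs at this <;> contradiction
    exact (hd.runIdx_redistrib_of_not_mem hT hR hc hcB).symm
  · have hcB : c ∉ belowCells μ T i j := fun hcB => by
      have := (mem_belowCells.1 hcB).2.2
      omega
    rw [← hd.runIdx_redistrib_of_not_mem hT hR hc hcB]
    exact hj
  · rw [hd.belowCells_redistrib hT hT' hR] at hcB ⊢
    show runIdx μ T (T c) = if readRank (belowCells μ T i j) c < _ then i else j
    rw [hd.runIdx_of_mem_belowCells hT hcB]
    exact (if_congr (readRank_lt_iff (fun _ => hd.row_le_of_mem_belowCells hT hT' hR)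
      (hd.mem_belowCells_row_iff hT) (hd.betaRun_le_shapeRow hT hd.2.2.2.1 hij) hcB)
      rfl rfl).symm

lemma unique (hd : SlinkData n μ T i j) {i' j' : ℕ} (hd' : SlinkData n μ T i' j') :
    i = i' ∧ j = j' := by
  obtain rfl : j = j' := by
    rcases lt_trichotomy j j' with h | h | h
    · exact absurd (hd'.2.2.1 j h) hd.2.1
    · exact h
    · exact absurd (hd.2.2.1 j' h) hd'.2.1
  refine ⟨?_, rfl⟩
  rcases lt_trichotomy i i' with h | h | h
  · have := hd'.2.2.2.2.2 i hd.2.2.2.1 h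
    have := hd.2.2.2.2.1
    omega
  · exact h
  · have := hd.2.2.2.2.2 i' hd'.2.2.2.1 h
    have := hd'.2.2.2.2.1
    omega

lemma eq_of_redistrib (hd : SlinkData n μ T i j) (hT : IsSYT n μ T) {X Y : ℕ × ℕ → ℕ}
    (hX : IsSYT n μ X) (hY : IsSYT n μ Y) {k : ℕ} (hRX : Redistrib μ T X i j k)
    (hRY : Redistrib μ T Y i j k) : X = Y := by
  refine hX.eq_of_runIdx_eq hY fun c hc => ?_
  by_cases hcB : c ∈ belowCells μ T i j
  · rw [hRX.2.2 c hcB, hRY.2.2 c hcB]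
  · rw [hd.runIdx_redistrib_of_not_mem hT hRX hc hcB, hd.runIdx_redistrib_of_not_mem hT hRY hc hcB]

end SlinkData

/-- `slink_*` is an involution on standard Young tableaux:
`slink_*(slink_*(T)) = T`. -/
theorem slinkStar_involutive (n : ℕ) (T T' T'' : ℕ × ℕ → ℕ)
    (h1 : SlinkStarRel n T T') (h2 : SlinkStarRel n T' T'') :
    T'' = T := by
  obtain ⟨μ, hT, hT', hcase⟩ := h1
  obtain ⟨ν, hT'ν, hT'', hcase'⟩ := h2
  obtain rfl := hT'.shape_unique hT'ν
  rcases hcase with ⟨hss, rfl⟩ | ⟨-, i, j, hd, hR⟩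
  · rcases hcase' with ⟨-, rfl⟩ | ⟨hnss, -⟩
    · rfl
    · exact absurd hss hnss
  · have hd' := hd.redistrib hT hT' hR
    rcases hcase' with ⟨hss', -⟩ | ⟨-, i', j', hd₂, hR'⟩
    · exact absurd (hss'.firstRunsSS j) hd'.2.1
    · obtain ⟨rfl, rfl⟩ := hd'.unique hd₂
      exact hd'.eq_of_redistrib hT' hT'' hT hR' (hd.redistrib_symm hT hT' hR)
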